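/- Suppose ℒ : [0,∞) → [0,∞) is absolutely continuous, nonnegative, and satisfies (1/2) dℒ²/dt + 2^{2k} ℒ² ≤ F(t) ℒ for a.e. t, where F ≥ 0 is integrable and k ∈ ℤ. Then for all t ≥ 0: ℒ(t) + 2^{2k} ∫₀ᵗ ℒ(s) ds ≤ ℒ(0) + 2 ∫₀ᵗ F(s) ds. -/
import Mathlib


open MeasureTheory intervalIntegral
noncomputable section

lemma sqrt_diff_bound' {a b c : ℝ} (hc : 0 < c) (ha : c ≤ a) (hb : c ≤ b) :
    |Real.sqrt a - Real.sqrt b| ≤ |a - b| / (2 * Real.sqrt c) := by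
  have ha0 : 0 ≤ a := hc.le.trans ha
  have hb0 : 0 ≤ b := hc.le.trans hb
  have hsa : Real.sqrt c ≤ Real.sqrt a := Real.sqrt_le_sqrt ha
  have hsb : Real.sqrt c ≤ Real.sqrt b := Real.sqrt_le_sqrt hb
  have hsc : 0 < Real.sqrt c := Real.sqrt_pos.mpr hc
  rw [le_div_iff₀ (by positivity)]
  have key : |Real.sqrt a - Real.sqrt b| * (Real.sqrt a + Real.sqrt b) = |a - b| := by
    rw [← abs_of_nonneg (by positivity : (0:ℝ) ≤ Real.sqrt a + Real.sqrt b), ← abs_mul]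
    congr 1
    linear_combination Real.sq_sqrt ha0 - Real.sq_sqrt hb0
  nlinarith [abs_nonneg (Real.sqrt a - Real.sqrt b),
    mul_le_mul_of_nonneg_left (add_le_add hsa hsb) (abs_nonneg (Real.sqrt a - Real.sqrt b))]

lemma nonpos_of_forall_pos_le' {x : ℝ} (h : ∀ η : ℝ, 0 < η → x ≤ η) : x ≤ 0 := by
  by_contra hx
  push_neg at hx
  linarith [h (x/2) (by linarith)]

set_option maxHeartbeats 1000000 in
lemma ftc_sqrt' (ε : ℝ) (hε : 0 < ε) (u D : ℝ → ℝ) (hu : Continuous u)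
    (hun : ∀ s, 0 ≤ u s)
    (hD : ∀ t : ℝ, IntervalIntegrable D volume 0 t)
    (hftc : ∀ t : ℝ, u t - u 0 = ∫ s in (0:ℝ)..t, D s)
    (t : ℝ) (ht : 0 ≤ t) :
    Real.sqrt (u t + ε ^ 2) - Real.sqrt (u 0 + ε ^ 2)
      = ∫ s in (0:ℝ)..t, D s / (2 * Real.sqrt (u s + ε ^ 2)) := by
  have hGcont : Continuous (fun s => Real.sqrt (u s + ε ^ 2)) :=
    Real.continuous_sqrt.comp (hu.add continuous_const)
  have hGlb : ∀ s, ε ≤ Real.sqrt (u s + ε ^ 2) := by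
    intro s
    calc ε = Real.sqrt (ε ^ 2) := (Real.sqrt_sq hε.le).symm
    _ ≤ _ := Real.sqrt_le_sqrt (by nlinarith [hun s])
  have hGpos : ∀ s, 0 < Real.sqrt (u s + ε ^ 2) := fun s => hε.trans_le (hGlb s)
  -- integrability of the target integrand
  have hint : IntervalIntegrable (fun s => D s / (2 * Real.sqrt (u s + ε ^ 2))) volume 0 t := by
    have e : (fun s => D s / (2 * Real.sqrt (u s + ε ^ 2)))
        = fun s => D s * (2 * Real.sqrt (u s + ε ^ 2))⁻¹ := by
      funext s; rw [div_eq_mul_inv]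
    rw [e]
    exact (hD t).mul_continuousOn
      ((continuous_const.mul hGcont).inv₀
        (fun s => ne_of_gt (mul_pos two_pos (hGpos s)))).continuousOn
  -- D restricted to (0,t]
  set D' : ℝ → ℝ := Set.indicator (Set.Ioc 0 t) D with hD'def
  have hD'int : Integrable D' volume := by
    have : IntegrableOn D (Set.Ioc 0 t) volume := by
      have := (hD t).def'
      rwa [Set.uIoc_of_le ht] at this
    exact this.integrable_indicator measurableSet_Ioc
  have hD'abs : ∀ x, |D' x| ≤ |D x| := by
    intro x
    by_cases hx : x ∈ Set.Ioc 0 t <;>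
      simp [hD'def, Set.indicator_of_mem, Set.indicator_of_notMem, hx, abs_nonneg]
  set ID := ∫ s in (0:ℝ)..t, |D s| with hIDdef
  have hID0 : 0 ≤ ID :=
    intervalIntegral.integral_nonneg ht (fun s _ => abs_nonneg _)
  set K : ℝ := 2 / ε + 2 * ID / ε ^ 3 with hKdef
  have hK0 : 0 < K := by positivity
  set X := Real.sqrt (u t + ε ^ 2) - Real.sqrt (u 0 + ε ^ 2)
      - ∫ s in (0:ℝ)..t, D s / (2 * Real.sqrt (u s + ε ^ 2)) with hXdef
  suffices hmain : ∀ δ : ℝ, 0 < δ → δ ≤ ε ^ 2 / 2 → |X| ≤ δ * K by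
    have h0 : |X| ≤ 0 := by
      apply nonpos_of_forall_pos_le'
      intro η hη
      have hδpos : 0 < min (ε ^ 2 / 2) (η / K) := lt_min (by positivity) (by positivity)
      have h1 := hmain _ hδpos (min_le_left _ _)
      have h2 : min (ε ^ 2 / 2) (η / K) * K ≤ η := by
        calc min (ε ^ 2 / 2) (η / K) * K ≤ (η / K) * K :=
              mul_le_mul_of_nonneg_right (min_le_right _ _) hK0.le
        _ = η := div_mul_cancel₀ η hK0.ne'
      linarith
    have hX0 : X = 0 := abs_eq_zero.mp (le_antisymm h0 (abs_nonneg _))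
    rw [hXdef] at hX0
    linarith
  intro δ hδ hδε
  -- approximate D' by a continuous compactly supported g
  obtain ⟨g, _gsupp, hgδ, hgcont, hgint⟩ :=
    hD'int.exists_hasCompactSupport_integral_sub_le hδ
  set un : ℝ → ℝ := fun s => u 0 + ∫ x in (0:ℝ)..s, g x with hundef
  have hunderiv : ∀ x, HasDerivAt un (g x) x := fun x =>
    ((hgcont.integral_hasStrictDerivAt 0 x).hasDerivAt).const_add (u 0)
  have huncont : Continuous un :=
    continuous_iff_continuousAt.2 fun x => (hunderiv x).continuousAt
  have hun0 : un 0 = u 0 := by simp [hundef]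
  -- closeness of un to u on [0,t]
  have habsint : Integrable (fun x => |g x - D' x|) volume := (hgint.sub hD'int).abs
  have hgD'L1 : ∫ x, |g x - D' x| ≤ δ := by
    calc ∫ x, |g x - D' x| = ∫ x, ‖D' x - g x‖ := by
          congr 1; funext x; rw [Real.norm_eq_abs, abs_sub_comm]
    _ ≤ δ := hgδ
  have hclose : ∀ s, 0 ≤ s → s ≤ t → |un s - u s| ≤ δ := by
    intro s hs0 hst
    have e1 : u s - u 0 = ∫ x in (0:ℝ)..s, D' x := by
      rw [hftc s]
      apply intervalIntegral.integral_congr_ae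
      filter_upwards with x hx
      rw [Set.uIoc_of_le hs0] at hx
      rw [hD'def, Set.indicator_of_mem (Set.Ioc_subset_Ioc_right hst hx)]
    have e2 : ∫ x in (0:ℝ)..s, (g x - D' x)
        = (∫ x in (0:ℝ)..s, g x) - ∫ x in (0:ℝ)..s, D' x :=
      intervalIntegral.integral_sub (hgcont.intervalIntegrable _ _)
        hD'int.intervalIntegrable
    have e3 : un s - u s = ∫ x in (0:ℝ)..s, (g x - D' x) := by
      rw [e2, ← e1]; simp only [hundef]; ring
    calc |un s - u s| = |∫ x in (0:ℝ)..s, (g x - D' x)| := by rw [e3]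
    _ ≤ ∫ x in (0:ℝ)..s, |g x - D' x| :=
        intervalIntegral.abs_integral_le_integral_abs hs0
    _ ≤ ∫ x, |g x - D' x| := by
        rw [intervalIntegral.integral_of_le hs0]
        exact setIntegral_le_integral habsint (ae_of_all _ fun x => abs_nonneg _)
    _ ≤ δ := hgD'L1
  clear_value un
  have hunlb : ∀ s, 0 ≤ s → s ≤ t → ε ^ 2 / 2 ≤ un s + ε ^ 2 := by
    intro s h1 h2
    have h3 := (abs_le.mp (hclose s h1 h2)).1
    have h4 := hun s
    nlinarith [h3, h4, hδε]
  -- FTC for the approximation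
  have hGn_cont : Continuous (fun s => Real.sqrt (un s + ε ^ 2)) :=
    Real.continuous_sqrt.comp (huncont.add continuous_const)
  have hGn_lb : ∀ s ∈ Set.Icc (0:ℝ) t, ε / 2 ≤ Real.sqrt (un s + ε ^ 2) := by
    intro s hs
    have h1 := hunlb s hs.1 hs.2
    calc ε / 2 = Real.sqrt ((ε / 2) ^ 2) := (Real.sqrt_sq (by positivity)).symm
    _ ≤ _ := Real.sqrt_le_sqrt (by nlinarith)
  have hintg : IntervalIntegrable (fun s => g s / (2 * Real.sqrt (un s + ε ^ 2)))
      volume 0 t := by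
    apply ContinuousOn.intervalIntegrable
    apply ContinuousOn.div hgcont.continuousOn
      (continuous_const.mul hGn_cont).continuousOn
    intro x hx
    rw [Set.uIcc_of_le ht] at hx
    exact ne_of_gt (mul_pos two_pos (lt_of_lt_of_le (by positivity) (hGn_lb x hx)))
  have hftcn : Real.sqrt (un t + ε ^ 2) - Real.sqrt (u 0 + ε ^ 2)
      = ∫ s in (0:ℝ)..t, g s / (2 * Real.sqrt (un s + ε ^ 2)) := by
    rw [← hun0]
    refine (intervalIntegral.integral_eq_sub_of_hasDerivAt
      (f := fun s => Real.sqrt (un s + ε ^ 2))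
      (f' := fun s => g s / (2 * Real.sqrt (un s + ε ^ 2))) ?_ hintg).symm
    intro x hx
    rw [Set.uIcc_of_le ht] at hx
    have h1 : HasDerivAt (fun s => un s + ε ^ 2) (g x) x := (hunderiv x).add_const _
    have h2 : un x + ε ^ 2 ≠ 0 :=
      ne_of_gt (lt_of_lt_of_le (by positivity) (hunlb x hx.1 hx.2))
    exact h1.sqrt h2
  -- term 1
  have hsqrt_close : ∀ s, 0 ≤ s → s ≤ t →
      |Real.sqrt (u s + ε ^ 2) - Real.sqrt (un s + ε ^ 2)| ≤ δ / ε := by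
    intro s h1 h2
    have c1 : ε ^ 2 / 4 ≤ u s + ε ^ 2 := by nlinarith [hun s]
    have c2 : ε ^ 2 / 4 ≤ un s + ε ^ 2 := by have := hunlb s h1 h2; nlinarith
    have hb := sqrt_diff_bound' (show (0:ℝ) < ε ^ 2 / 4 by positivity) c1 c2
    have hsq : Real.sqrt (ε ^ 2 / 4) = ε / 2 := by
      rw [show ε ^ 2 / 4 = (ε / 2) ^ 2 by ring, Real.sqrt_sq (by positivity)]
    rw [hsq] at hb
    have e : |(u s + ε ^ 2) - (un s + ε ^ 2)| = |u s - un s| := by ring_nf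
    rw [e] at hb
    have h3 : |u s - un s| ≤ δ := by rw [abs_sub_comm]; exact hclose s h1 h2
    calc |Real.sqrt (u s + ε ^ 2) - Real.sqrt (un s + ε ^ 2)|
        ≤ |u s - un s| / (2 * (ε / 2)) := hb
    _ = |u s - un s| / ε := by ring_nf
    _ ≤ δ / ε := by gcongr
  -- rewrite target integral using D'
  have e4 : ∫ s in (0:ℝ)..t, D s / (2 * Real.sqrt (u s + ε ^ 2))
      = ∫ s in (0:ℝ)..t, D' s / (2 * Real.sqrt (u s + ε ^ 2)) := by
    apply intervalIntegral.integral_congr_ae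
    filter_upwards with x hx
    rw [Set.uIoc_of_le ht] at hx
    rw [hD'def, Set.indicator_of_mem hx]
  have hintD' : IntervalIntegrable (fun s => D' s / (2 * Real.sqrt (u s + ε ^ 2)))
      volume 0 t := by
    have e : (fun s => D' s / (2 * Real.sqrt (u s + ε ^ 2)))
        = fun s => D' s * (2 * Real.sqrt (u s + ε ^ 2))⁻¹ := by
      funext s; rw [div_eq_mul_inv]
    rw [e]
    exact hD'int.intervalIntegrable.mul_continuousOn
      ((continuous_const.mul hGcont).inv₀
        (fun s => ne_of_gt (mul_pos two_pos (hGpos s)))).continuousOn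
  -- pointwise bound on [0,t]
  have hpt : ∀ s ∈ Set.Icc (0:ℝ) t,
      |g s / (2 * Real.sqrt (un s + ε ^ 2)) - D' s / (2 * Real.sqrt (u s + ε ^ 2))|
        ≤ |g s - D' s| * (1 / ε) + |D' s| * (2 * δ / ε ^ 3) := by
    intro s hs
    set a := Real.sqrt (un s + ε ^ 2) with hadef
    set b := Real.sqrt (u s + ε ^ 2) with hbdef
    have ha : ε / 2 ≤ a := hGn_lb s hs
    have hb : ε / 2 ≤ b := le_trans (by linarith) (hGlb s)
    have ha0 : 0 < a := by linarith
    have hb0 : 0 < b := by linarith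
    have hab : |b - a| ≤ δ / ε := hsqrt_close s hs.1 hs.2
    have h1 : g s / (2 * a) - D' s / (2 * b)
        = (g s - D' s) / (2 * a) + D' s * ((b - a) / (2 * a * b)) := by
      field_simp
      ring
    rw [h1]
    refine (abs_add_le _ _).trans (add_le_add ?_ ?_)
    · rw [abs_div, abs_of_pos (by positivity : (0:ℝ) < 2 * a), mul_one_div]
      gcongr
      linarith
    · rw [abs_mul, abs_div, abs_of_pos (by positivity : (0:ℝ) < 2 * a * b)]
      apply mul_le_mul_of_nonneg_left _ (abs_nonneg _)
      calc |b - a| / (2 * a * b) ≤ (δ / ε) / (ε ^ 2 / 2) :=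
            div_le_div₀ (by positivity) hab (by positivity) (by nlinarith)
      _ = 2 * δ / ε ^ 3 := by field_simp
  -- assemble
  have habs1 : IntervalIntegrable (fun s => |g s - D' s|) volume 0 t :=
    habsint.intervalIntegrable
  have habsD' : IntervalIntegrable (fun s => |D' s|) volume 0 t :=
    hD'int.abs.intervalIntegrable
  have hbound_int : IntervalIntegrable
      (fun s => |g s - D' s| * (1 / ε) + |D' s| * (2 * δ / ε ^ 3)) volume 0 t :=
    (habs1.mul_const _).add (habsD'.mul_const _)
  have hdiff_int : IntervalIntegrable
      (fun s => g s / (2 * Real.sqrt (un s + ε ^ 2))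
        - D' s / (2 * Real.sqrt (u s + ε ^ 2))) volume 0 t := hintg.sub hintD'
  have i1 : ∫ s in (0:ℝ)..t, |g s - D' s| ≤ δ := by
    rw [intervalIntegral.integral_of_le ht]
    exact (setIntegral_le_integral habsint (ae_of_all _ fun x => abs_nonneg _)).trans hgD'L1
  have i2 : ∫ s in (0:ℝ)..t, |D' s| ≤ ID :=
    intervalIntegral.integral_mono_on ht habsD' (hD t).abs (fun x _ => hD'abs x)
  have hT2 : |(∫ s in (0:ℝ)..t, g s / (2 * Real.sqrt (un s + ε ^ 2)))
      - ∫ s in (0:ℝ)..t, D' s / (2 * Real.sqrt (u s + ε ^ 2))|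
      ≤ δ * (1 / ε) + ID * (2 * δ / ε ^ 3) := by
    rw [← intervalIntegral.integral_sub hintg hintD']
    calc |∫ s in (0:ℝ)..t, (g s / (2 * Real.sqrt (un s + ε ^ 2))
            - D' s / (2 * Real.sqrt (u s + ε ^ 2)))|
        ≤ ∫ s in (0:ℝ)..t, |g s / (2 * Real.sqrt (un s + ε ^ 2))
            - D' s / (2 * Real.sqrt (u s + ε ^ 2))| :=
          intervalIntegral.abs_integral_le_integral_abs ht
    _ ≤ ∫ s in (0:ℝ)..t, (|g s - D' s| * (1 / ε) + |D' s| * (2 * δ / ε ^ 3)) :=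
          intervalIntegral.integral_mono_on ht hdiff_int.abs hbound_int hpt
    _ = (∫ s in (0:ℝ)..t, |g s - D' s|) * (1 / ε)
          + (∫ s in (0:ℝ)..t, |D' s|) * (2 * δ / ε ^ 3) := by
          rw [intervalIntegral.integral_add (habs1.mul_const _) (habsD'.mul_const _),
            intervalIntegral.integral_mul_const, intervalIntegral.integral_mul_const]
    _ ≤ δ * (1 / ε) + ID * (2 * δ / ε ^ 3) := by gcongr
  have hT1 : |Real.sqrt (u t + ε ^ 2) - Real.sqrt (un t + ε ^ 2)| ≤ δ / ε :=
    hsqrt_close t ht le_rfl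
  have hXsplit : X = (Real.sqrt (u t + ε ^ 2) - Real.sqrt (un t + ε ^ 2))
      + ((∫ s in (0:ℝ)..t, g s / (2 * Real.sqrt (un s + ε ^ 2)))
        - ∫ s in (0:ℝ)..t, D' s / (2 * Real.sqrt (u s + ε ^ 2))) := by
    rw [hXdef, e4]
    linear_combination hftcn
  calc |X| = |(Real.sqrt (u t + ε ^ 2) - Real.sqrt (un t + ε ^ 2))
      + ((∫ s in (0:ℝ)..t, g s / (2 * Real.sqrt (un s + ε ^ 2)))
        - ∫ s in (0:ℝ)..t, D' s / (2 * Real.sqrt (u s + ε ^ 2)))| := by rw [hXsplit]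
  _ ≤ |Real.sqrt (u t + ε ^ 2) - Real.sqrt (un t + ε ^ 2)|
      + |(∫ s in (0:ℝ)..t, g s / (2 * Real.sqrt (un s + ε ^ 2)))
        - ∫ s in (0:ℝ)..t, D' s / (2 * Real.sqrt (u s + ε ^ 2))| := abs_add_le _ _
  _ ≤ δ / ε + (δ * (1 / ε) + ID * (2 * δ / ε ^ 3)) := add_le_add hT1 hT2
  _ = δ * K := by rw [hKdef]; ring

/-- Gronwall-type lemma.  If `ℒ ≥ 0` is absolutely continuous (encoded
by the fundamental theorem of calculus for `ℒ²` with a.e. derivative `D`) and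
satisfies `(1/2)(ℒ²)' + 2^{2k} ℒ² ≤ F ℒ` a.e. with `F ≥ 0` locally integrable, then
`ℒ(t) + 2^{2k} ∫₀ᵗ ℒ ≤ ℒ(0) + 2∫₀ᵗ F` for all `t ≥ 0`. -/
theorem gronwall_localized_energy (k : ℤ) (L F D : ℝ → ℝ)
    (hLnonneg : ∀ t, 0 ≤ L t)
    (hLcont : Continuous L)
    (hFnonneg : ∀ t, 0 ≤ F t)
    (hFint : ∀ t : ℝ, IntervalIntegrable F volume 0 t)
    (hLint : ∀ t : ℝ, IntervalIntegrable L volume 0 t)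
    (hDint : ∀ t : ℝ, IntervalIntegrable D volume 0 t)
    (hderiv : ∀ᵐ t ∂(volume : Measure ℝ), HasDerivAt (fun s => L s ^ 2) (D t) t)
    (hftc : ∀ t : ℝ, L t ^ 2 - L 0 ^ 2 = ∫ s in (0:ℝ)..t, D s)
    (hineq : ∀ᵐ t ∂(volume : Measure ℝ),
      (1 / 2) * D t + (2:ℝ) ^ (2 * k) * L t ^ 2 ≤ F t * L t) :
    ∀ t : ℝ, 0 ≤ t →
      L t + (2:ℝ) ^ (2 * k) * ∫ s in (0:ℝ)..t, L s ≤
        L 0 + 2 * ∫ s in (0:ℝ)..t, F s := by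
  intro t ht
  set c := (2:ℝ) ^ (2 * k) with hcdef
  have hc : 0 < c := by rw [hcdef]; positivity
  have hIF : 0 ≤ ∫ s in (0:ℝ)..t, F s :=
    intervalIntegral.integral_nonneg ht fun s _ => hFnonneg s
  have hu : Continuous (fun s => L s ^ 2) := hLcont.pow 2
  have key : ∀ ε : ℝ, 0 < ε →
      L t + c * ∫ s in (0:ℝ)..t, L s
        ≤ L 0 + (∫ s in (0:ℝ)..t, F s) + ε * (1 + c * t) := by
    intro ε hε
    have hG := ftc_sqrt' ε hε (fun s => L s ^ 2) D hu (fun s => sq_nonneg _) hDint hftc t ht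
    have hGcont : Continuous (fun s => Real.sqrt (L s ^ 2 + ε ^ 2)) :=
      Real.continuous_sqrt.comp (hu.add continuous_const)
    have hGlb : ∀ s, ε ≤ Real.sqrt (L s ^ 2 + ε ^ 2) := by
      intro s
      calc ε = Real.sqrt (ε ^ 2) := (Real.sqrt_sq hε.le).symm
      _ ≤ _ := Real.sqrt_le_sqrt (by nlinarith [sq_nonneg (L s)])
    have hGpos : ∀ s, 0 < Real.sqrt (L s ^ 2 + ε ^ 2) :=
      fun s => lt_of_lt_of_le hε (hGlb s)
    have hLleG : ∀ s, L s ≤ Real.sqrt (L s ^ 2 + ε ^ 2) := by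
      intro s
      calc L s = Real.sqrt (L s ^ 2) := (Real.sqrt_sq (hLnonneg s)).symm
      _ ≤ _ := Real.sqrt_le_sqrt (by nlinarith)
    have hGleL : ∀ s, Real.sqrt (L s ^ 2 + ε ^ 2) ≤ L s + ε := by
      intro s
      calc Real.sqrt (L s ^ 2 + ε ^ 2) ≤ Real.sqrt ((L s + ε) ^ 2) :=
            Real.sqrt_le_sqrt (by nlinarith [hLnonneg s])
      _ = L s + ε := Real.sqrt_sq (by have := hLnonneg s; positivity)
    have hint1 : IntervalIntegrable
        (fun s => D s / (2 * Real.sqrt (L s ^ 2 + ε ^ 2))) volume 0 t := by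
      have e : (fun s => D s / (2 * Real.sqrt (L s ^ 2 + ε ^ 2)))
          = fun s => D s * (2 * Real.sqrt (L s ^ 2 + ε ^ 2))⁻¹ := by
        funext s; rw [div_eq_mul_inv]
      rw [e]
      exact (hDint t).mul_continuousOn
        ((continuous_const.mul hGcont).inv₀
          (fun s => ne_of_gt (mul_pos two_pos (hGpos s)))).continuousOn
    have hint2 : IntervalIntegrable (fun s => F s - c * L s + c * ε) volume 0 t :=
      ((hFint t).sub ((hLint t).const_mul c)).add intervalIntegrable_const
    have hmono : ∫ s in (0:ℝ)..t, D s / (2 * Real.sqrt (L s ^ 2 + ε ^ 2))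
        ≤ ∫ s in (0:ℝ)..t, (F s - c * L s + c * ε) := by
      apply intervalIntegral.integral_mono_ae ht hint1 hint2
      filter_upwards [hineq] with s hs
      have hGp := hGpos s
      rw [div_le_iff₀ (mul_pos two_pos hGp)]
      nlinarith [mul_nonneg (hFnonneg s) (sub_nonneg.2 (hLleG s)),
        mul_nonneg (mul_nonneg hc.le (hLnonneg s))
          (sub_nonneg.2 ((hGleL s).trans_eq' rfl)),
        mul_nonneg (mul_nonneg hc.le hε.le) (sub_nonneg.2 (hLleG s)),
        mul_nonneg (mul_nonneg hc.le (hLnonneg s))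
          (sub_nonneg.2 (show Real.sqrt (L s ^ 2 + ε ^ 2) ≤ L s + ε from hGleL s))]
    have hintegral_eq : ∫ s in (0:ℝ)..t, (F s - c * L s + c * ε)
        = (∫ s in (0:ℝ)..t, F s) - c * (∫ s in (0:ℝ)..t, L s) + c * ε * t := by
      rw [intervalIntegral.integral_add ((hFint t).sub ((hLint t).const_mul c))
          intervalIntegrable_const,
        intervalIntegral.integral_sub (hFint t) ((hLint t).const_mul c),
        intervalIntegral.integral_const_mul, intervalIntegral.integral_const]
      simp [smul_eq_mul]
      ring
    have h3 : Real.sqrt (L 0 ^ 2 + ε ^ 2) ≤ L 0 + ε := hGleL 0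
    have h1 : L t ≤ Real.sqrt (L t ^ 2 + ε ^ 2) := hLleG t
    nlinarith [hG, hmono, hintegral_eq, h3, h1]
  have lim : L t + c * ∫ s in (0:ℝ)..t, L s ≤ L 0 + ∫ s in (0:ℝ)..t, F s := by
    have hden : (0:ℝ) < 1 + c * t := by nlinarith
    have h0 : (L t + c * ∫ s in (0:ℝ)..t, L s) - (L 0 + ∫ s in (0:ℝ)..t, F s) ≤ 0 := by
      apply nonpos_of_forall_pos_le'
      intro η hη
      have h1 := key (η / (1 + c * t)) (by positivity)
      have h2 : (η / (1 + c * t)) * (1 + c * t) = η := div_mul_cancel₀ _ hden.ne'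
      linarith
    linarith
  linarith
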